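/- Let τ > 0 and let x : [-τ, T] → ℝ be continuous with T ≥ τ. Define v : [0,T] → ℝ × L²(-τ,0;ℝ) by v(t) = (x(t), x_t), where x_t(θ) = x(t+θ), and let C(v(t)) := x(t-τ). Then ∫₀ᵀ |x(t-τ)| dt ≤ (1+√τ)·( |v(0)|_H + ∫₀ᵀ |v(t)|_H dt ), where |(a,φ)|_H² = |a|² + ∫_{-τ}^0 |φ(θ)|² dθ. -/

import Mathlib

/-!
After the substitution `s = t - τ` the delayed output splits into an integral of `|x|` over the
initial history `[-τ, 0]` and one over `[0, T - τ]`. Cauchy–Schwarz bounds the first by `√τ` times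
the `L²`-part of `|v(0)|_H`, and the second is dominated pointwise by `|x(t)| ≤ |v(t)|_H`.
The sliding-window integral `t ↦ ∫_{t-τ}^t x²` is continuous, so `t ↦ |v(t)|_H` is integrable.
-/

open MeasureTheory Real Set

theorem integral_abs_le_sqrt_measureReal_mul_sqrt_integral_sq {α : Type*} [MeasurableSpace α]
    {μ : Measure α} [IsFiniteMeasure μ] {f : α → ℝ} (hf : MemLp f 2 μ) :
    ∫ a, |f a| ∂μ ≤ √(μ.real univ) * √(∫ a, f a ^ 2 ∂μ) := by
  have holder := integral_mul_le_Lp_mul_Lq_of_nonneg Real.HolderConjugate.two_two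
    (ae_of_all μ fun a => abs_nonneg (f a)) (ae_of_all μ fun _ => zero_le_one)
    (by rw [ENNReal.ofReal_ofNat]; exact hf.abs) (memLp_const (1 : ℝ))
  simp only [rpow_two, sq_abs, one_pow, mul_one, integral_const, smul_eq_mul,
    ← sqrt_eq_rpow] at holder
  rwa [mul_comm]

theorem intervalIntegral_abs_le_sqrt_mul_sqrt_integral_sq {f : ℝ → ℝ} {a b : ℝ} (hab : a ≤ b)
    (hf : ContinuousOn f (Icc a b)) :
    ∫ s in a..b, |f s| ≤ √(b - a) * √(∫ s in a..b, f s ^ 2) := by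
  have : IsFiniteMeasure (volume.restrict (Ioc a b)) :=
    isFiniteMeasure_restrict.2 measure_Ioc_lt_top.ne
  have hf' : ContinuousOn f (Ioc a b) := hf.mono Ioc_subset_Icc_self
  have hL2 : MemLp f 2 (volume.restrict (Ioc a b)) :=
    (memLp_two_iff_integrable_sq (hf'.aestronglyMeasurable measurableSet_Ioc)).2
      ((hf.pow 2).intervalIntegrable_of_Icc hab).1
  simpa [intervalIntegral.integral_of_le hab, hab] using
    integral_abs_le_sqrt_measureReal_mul_sqrt_integral_sq hL2

theorem ContinuousOn.intervalIntegral_comp_add {E : Type*} [NormedAddCommGroup E] [NormedSpace ℝ E]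
    {f : ℝ → E} {a b c d : ℝ} (hcd : c ≤ d) (hf : ContinuousOn f (Icc a b)) :
    ContinuousOn (fun t => ∫ θ in c..d, f (t + θ)) (Icc (a - c) (b - d)) := by
  intro t₀ ht₀
  have hab : a ≤ b := by linarith [ht₀.1, ht₀.2]
  have hshift : ∀ e, c ≤ e → e ≤ d → MapsTo (· + e) (Icc (a - c) (b - d)) (uIcc a b) :=
    fun e hce hed t ht => by rw [uIcc_of_le hab]; constructor <;> linarith [ht.1, ht.2]
  have hint : ∀ u ∈ uIcc a b, IntervalIntegrable f volume a u := fun u hu =>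
    (hf.mono (uIcc_of_le hab ▸ uIcc_subset_uIcc_left hu)).intervalIntegrable
  set F : ℝ → E := fun u => ∫ s in a..u, f s
  have hF : ContinuousOn F (uIcc a b) :=
    intervalIntegral.continuousOn_primitive_interval ((uIcc_of_le hab).symm ▸ hf.integrableOn_Icc)
  have heq : EqOn (fun t => ∫ θ in c..d, f (t + θ)) (fun t => F (t + d) - F (t + c))
      (Icc (a - c) (b - d)) := fun t ht => by
    dsimp only
    rw [intervalIntegral.integral_comp_add_left f t]
    exact (intervalIntegral.integral_interval_sub_left (hint _ (hshift d hcd le_rfl ht))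
      (hint _ (hshift c le_rfl hcd ht))).symm
  refine (ContinuousOn.congr ?_ heq) t₀ ht₀
  exact (hF.comp (continuous_add_const d).continuousOn (hshift d hcd le_rfl)).sub
    (hF.comp (continuous_add_const c).continuousOn (hshift c le_rfl hcd))

theorem intervalIntegral_abs_comp_sub_le {f : ℝ → ℝ} {τ T : ℝ} (hτ : 0 ≤ τ) (hT : τ ≤ T)
    (hf : ContinuousOn f (Icc (-τ) T)) :
    ∫ t in 0..T, |f (t - τ)| ≤ (∫ s in -τ..0, |f s|) + ∫ s in 0..T, |f s| := by
  have hint : ∀ u ∈ Icc (-τ) T, ∀ v ∈ Icc (-τ) T,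
      IntervalIntegrable (fun s => |f s|) volume u v := fun u hu v hv =>
    (hf.abs.mono (uIcc_subset_Icc hu hv)).intervalIntegrable
  have h0 : (0 : ℝ) ∈ Icc (-τ) T := ⟨by linarith, by linarith⟩
  have hTτ : T - τ ∈ Icc (-τ) T := ⟨by linarith, by linarith⟩
  rw [intervalIntegral.integral_comp_sub_right (fun s => |f s|) τ, zero_sub,
    ← intervalIntegral.integral_add_adjacent_intervals (hint _ (left_mem_Icc.2 (by linarith)) _ h0)
      (hint _ h0 _ hTτ)]
  gcongr
  exact intervalIntegral.integral_mono_interval le_rfl (by linarith) (by linarith)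
    (ae_of_all _ fun s => abs_nonneg (f s)) (hint _ h0 _ (right_mem_Icc.2 (by linarith)))

/-- Measurement estimate (MES) for the delayed evaluation `C(v(t)) = x(t-τ)` in
`H = ℝ × L²(-τ,0;ℝ)`. -/
theorem measurement_estimate_scalar_delay
    (τ T : ℝ) (hτ : 0 < τ) (hT : τ ≤ T) (x : ℝ → ℝ)
    (hx : ContinuousOn x (Set.Icc (-τ) T))
    (Hnorm : ℝ → ℝ)
    (hH : ∀ t, Hnorm t = Real.sqrt ((x t) ^ 2 + ∫ θ in (-τ)..(0:ℝ), (x (t + θ)) ^ 2)) :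
    (∫ t in (0:ℝ)..T, |x (t - τ)|) ≤
      (1 + Real.sqrt τ) * (Hnorm 0 + ∫ t in (0:ℝ)..T, Hnorm t) := by
  have hT0 : 0 ≤ T := hτ.le.trans hT
  have hHnonneg : ∀ t, 0 ≤ Hnorm t := fun t => (hH t).symm ▸ sqrt_nonneg _
  have hxH : ∀ t, |x t| ≤ Hnorm t := fun t => (hH t).symm ▸ abs_le_sqrt
    (le_add_of_nonneg_right (intervalIntegral.integral_nonneg (by linarith) fun _ _ => sq_nonneg _))
  have hHistory : √(∫ s in -τ..0, x s ^ 2) ≤ Hnorm 0 := by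
    rw [hH 0]
    simp only [zero_add]
    exact sqrt_le_sqrt (le_add_of_nonneg_left (sq_nonneg _))
  have hHcont : ContinuousOn Hnorm (Icc 0 T) := by
    have hwindow := (hx.pow 2).intervalIntegral_comp_add (c := -τ) (d := 0) (by linarith)
    rw [sub_neg_eq_add, neg_add_cancel, sub_zero] at hwindow
    refine ContinuousOn.congr ?_ fun t _ => hH t
    exact continuous_sqrt.comp_continuousOn
      (((hx.pow 2).mono (Icc_subset_Icc_left (by linarith))).add hwindow)
  have hHint : 0 ≤ ∫ t in 0..T, Hnorm t :=
    intervalIntegral.integral_nonneg hT0 fun t _ => hHnonneg t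
  calc (∫ t in 0..T, |x (t - τ)|) ≤ (∫ s in -τ..0, |x s|) + ∫ s in 0..T, |x s| :=
        intervalIntegral_abs_comp_sub_le hτ.le hT hx
    _ ≤ √τ * Hnorm 0 + ∫ t in 0..T, Hnorm t := by
        gcongr
        · calc (∫ s in -τ..0, |x s|) ≤ √(0 - -τ) * √(∫ s in -τ..0, x s ^ 2) :=
                intervalIntegral_abs_le_sqrt_mul_sqrt_integral_sq (by linarith)
                  (hx.mono (Icc_subset_Icc_right hT0))
            _ ≤ √τ * Hnorm 0 := by rw [zero_sub, neg_neg]; gcongr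
        · exact intervalIntegral.integral_mono_on hT0
            ((hx.abs.mono (Icc_subset_Icc_left (by linarith))).intervalIntegrable_of_Icc hT0)
            (hHcont.intervalIntegrable_of_Icc hT0) fun t _ => hxH t
    _ ≤ (1 + √τ) * (Hnorm 0 + ∫ t in 0..T, Hnorm t) := by
        nlinarith [hHnonneg 0, mul_nonneg (sqrt_nonneg τ) hHint]
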